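/- arXiv:1209.0178 — 3 statements merged into one kernel-verified Lean document; each statement's English description precedes it below -/
import Mathlib

section
/- If a Gauss diagram G₁ is obtained from G₂ by deleting one chord, then the number of bridges of G₁ is at most the number of bridges of G₂. -/
/-- A Gauss diagram, recorded as the cyclic word of its chord endpoints: each endpoint is
a pair `(c, b)` where `c` is the chord label and `b = true` for the arrow head,
`b = false` for the arrow tail.  Each chord occurring in the diagram contributes exactly
one head and one tail. -/
structure GaussDiagram where
  word : List (ℕ × Bool)
  once : ∀ c b, word.count (c, b) ≤ 1
  paired : ∀ c, (c, true) ∈ word ↔ (c, false) ∈ word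

/-- The number of bridges of a Gauss diagram: the number of arcs of the circle between
two (cyclically) consecutive arrow heads containing at least one arrow tail.  Since the
endpoints strictly between consecutive heads are all tails, such arcs correspond exactly
to cyclically adjacent pairs (tail, head). -/
def bridges (w : List (ℕ × Bool)) : ℕ :=
  ((w.zip (w.rotate 1)).filter (fun p => !p.1.2 && p.2.2)).length

/-- `G₁` is obtained from `G₂` by deleting the chord `c` (removing its head and its tail
from the circle). -/
def IsChordDeletion (G₁ G₂ : GaussDiagram) (c : ℕ) : Prop :=
  (c, true) ∈ G₂.word ∧ G₁.word = G₂.word.filter (fun p => p.1 != c)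

/-- `G₁` is obtained from `G₂` by deleting the (finite) set `S` of chords. -/
def IsChordsDeletion (G₁ G₂ : GaussDiagram) (S : Finset ℕ) : Prop :=
  G₁.word = G₂.word.filter (fun p => decide (p.1 ∉ S))

/-- Auxiliary: the weight of an adjacent pair (1 if it is a (tail, head) pair). -/
def gPair (p q : ℕ × Bool) : ℕ := if !p.2 && q.2 then 1 else 0

/-- Auxiliary: linear count of adjacent (tail, head) pairs. -/
def pc (l : List (ℕ × Bool)) : ℕ :=
  ((l.zip l.tail).filter (fun p => !p.1.2 && p.2.2)).length

lemma pc_nil : pc [] = 0 := rfl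
lemma pc_single (x : ℕ × Bool) : pc [x] = 0 := rfl

lemma pc_cons₂ (x y : ℕ × Bool) (t : List (ℕ × Bool)) :
    pc (x :: y :: t) = gPair x y + pc (y :: t) := by
  simp only [pc, gPair, List.zip_cons_cons, List.tail, List.filter_cons]
  by_cases h : (!x.2 && y.2) = true <;> simp [h] <;> omega

lemma bridges_cons (h : ℕ × Bool) (t : List (ℕ × Bool)) :
    bridges (h :: t) = pc (h :: t ++ [h]) := by
  have hrot : (h :: t).rotate 1 = t ++ [h] := by
    simpa using List.rotate_cons_succ t h 0
  have hzip : ((h :: t) ++ [h]).zip (t ++ [h]) = (h :: t).zip (t ++ [h]) := by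
    have := List.zip_append (l₁ := h :: t) (l₂ := t ++ [h]) (r₁ := [h])
      (r₂ := ([] : List (ℕ × Bool))) (by simp)
    simpa using this
  simp only [bridges, pc, hrot]
  rw [show (h :: t ++ [h]).tail = t ++ [h] by simp, hzip]

lemma gPair_triangle (x a y : ℕ × Bool) : gPair x y ≤ gPair x a + gPair a y := by
  rcases x with ⟨_, xb⟩; rcases a with ⟨_, ab⟩; rcases y with ⟨_, yb⟩
  cases xb <;> cases ab <;> cases yb <;> simp [gPair]

/-- Replacing the last letter costs at most `gPair cc b`. -/
lemma pc_last_swap : ∀ (l : List (ℕ × Bool)) (b cc : ℕ × Bool),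
    pc (l ++ [b]) ≤ pc (l ++ [cc]) + gPair cc b
  | [], b, cc => by simp [pc_single]
  | [x], b, cc => by
      simpa [pc_cons₂, pc_single] using gPair_triangle x cc b
  | x :: y :: t, b, cc => by
      have := pc_last_swap (y :: t) b cc
      simp only [List.cons_append, pc_cons₂] at *
      omega

/-- Inserting a letter does not decrease the linear pair count. -/
lemma pc_insert : ∀ (l₁ : List (ℕ × Bool)) (a : ℕ × Bool) (l₂ : List (ℕ × Bool)),
    pc (l₁ ++ l₂) ≤ pc (l₁ ++ a :: l₂)
  | [], a, [] => by simp [pc_nil, pc_single]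
  | [], a, h :: t => by simp [pc_cons₂]
  | [x], a, [] => by simp [pc_single]
  | [x], a, h :: t => by
      have := gPair_triangle x a h
      simp only [List.cons_append, List.nil_append, pc_cons₂]
      omega
  | x :: y :: t, a, l₂ => by
      have := pc_insert (y :: t) a l₂
      simp only [List.cons_append, pc_cons₂] at *
      omega

/-- Inserting a letter does not decrease the cyclic pair count. -/
lemma bridges_insert (l₁ : List (ℕ × Bool)) (a : ℕ × Bool) (l₂ : List (ℕ × Bool)) :
    bridges (l₁ ++ l₂) ≤ bridges (l₁ ++ a :: l₂) := by
  rcases l₁ with _ | ⟨h, t⟩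
  · rcases l₂ with _ | ⟨h, t⟩
    · simp [bridges]
    · simp only [List.nil_append, bridges_cons]
      calc pc (h :: t ++ [h]) ≤ pc (h :: t ++ [a]) + gPair a h := pc_last_swap (h :: t) h a
        _ = pc (a :: (h :: t ++ [a])) := by simp only [List.cons_append, pc_cons₂]; omega
        _ = pc (a :: h :: t ++ [a]) := by simp
  · simp only [List.cons_append, bridges_cons]
    have := pc_insert (h :: t) a (l₂ ++ [h])
    simpa using this

/-- Inserting two letters does not decrease the cyclic pair count. -/
lemma bridges_insert₂ (A B C : List (ℕ × Bool)) (x y : ℕ × Bool) :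
    bridges (A ++ (B ++ C)) ≤ bridges (A ++ x :: (B ++ y :: C)) := by
  calc bridges (A ++ (B ++ C)) ≤ bridges (A ++ x :: (B ++ C)) := bridges_insert A x (B ++ C)
    _ = bridges ((A ++ x :: B) ++ C) := by simp
    _ ≤ bridges ((A ++ x :: B) ++ y :: C) := bridges_insert _ y C
    _ = bridges (A ++ x :: (B ++ y :: C)) := by simp

lemma filter_eq_self_of_not_mem (c : ℕ) (L : List (ℕ × Bool))
    (h1 : (c, true) ∉ L) (h2 : (c, false) ∉ L) :
    L.filter (fun p => p.1 != c) = L := by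
  apply List.filter_eq_self.2
  rintro ⟨d, b⟩ hp
  simp only [bne_iff_ne, ne_eq, decide_eq_true_eq]
  rintro rfl
  cases b
  · exact h2 hp
  · exact h1 hp

/-- Deleting one chord does not increase the number of bridges of a Gauss diagram. -/
theorem bridges_le_of_chordDeletion (G₁ G₂ : GaussDiagram) (c : ℕ)
    (h : IsChordDeletion G₁ G₂ c) :
    bridges G₁.word ≤ bridges G₂.word := by
  obtain ⟨hT, hfil⟩ := h
  have hF : (c, false) ∈ G₂.word := (G₂.paired c).1 hT
  obtain ⟨A, R, hw⟩ := List.append_of_mem hT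
  rw [hw] at hF
  rcases List.mem_append.1 hF with hA | hR
  · -- (c,false) occurs before (c,true)
    obtain ⟨A₁, A₂, hA'⟩ := List.append_of_mem hA
    have hw' : G₂.word = A₁ ++ (c, false) :: (A₂ ++ (c, true) :: R) := by
      rw [hw, hA']; simp
    have o1 := G₂.once c true
    have o2 := G₂.once c false
    rw [hw'] at o1 o2
    simp [List.count_append, List.count_cons] at o1 o2
    have n1t : (c, true) ∉ A₁ := List.count_eq_zero.1 (by omega)
    have n2t : (c, true) ∉ A₂ := List.count_eq_zero.1 (by omega)
    have n3t : (c, true) ∉ R := List.count_eq_zero.1 (by omega)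
    have n1f : (c, false) ∉ A₁ := List.count_eq_zero.1 (by omega)
    have n2f : (c, false) ∉ A₂ := List.count_eq_zero.1 (by omega)
    have n3f : (c, false) ∉ R := List.count_eq_zero.1 (by omega)
    have hfw : G₂.word.filter (fun p => p.1 != c) = A₁ ++ (A₂ ++ R) := by
      rw [hw']
      simp only [List.filter_append, List.filter_cons,
        filter_eq_self_of_not_mem c A₁ n1t n1f,
        filter_eq_self_of_not_mem c A₂ n2t n2f,
        filter_eq_self_of_not_mem c R n3t n3f]
      simp
    rw [hfil, hfw, hw']
    exact bridges_insert₂ A₁ A₂ R (c, false) (c, true)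
  · have hR' : (c, false) ∈ R := by
      rcases List.mem_cons.1 hR with h' | h'
      · simp at h'
      · exact h'
    obtain ⟨R₁, R₂, hRd⟩ := List.append_of_mem hR'
    have hw' : G₂.word = A ++ (c, true) :: (R₁ ++ (c, false) :: R₂) := by
      rw [hw, hRd]
    have o1 := G₂.once c true
    have o2 := G₂.once c false
    rw [hw'] at o1 o2
    simp [List.count_append, List.count_cons] at o1 o2
    have n1t : (c, true) ∉ A := List.count_eq_zero.1 (by omega)
    have n2t : (c, true) ∉ R₁ := List.count_eq_zero.1 (by omega)
    have n3t : (c, true) ∉ R₂ := List.count_eq_zero.1 (by omega)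
    have n1f : (c, false) ∉ A := List.count_eq_zero.1 (by omega)
    have n2f : (c, false) ∉ R₁ := List.count_eq_zero.1 (by omega)
    have n3f : (c, false) ∉ R₂ := List.count_eq_zero.1 (by omega)
    have hfw : G₂.word.filter (fun p => p.1 != c) = A ++ (R₁ ++ R₂) := by
      rw [hw']
      simp only [List.filter_append, List.filter_cons,
        filter_eq_self_of_not_mem c A n1t n1f,
        filter_eq_self_of_not_mem c R₁ n2t n2f,
        filter_eq_self_of_not_mem c R₂ n3t n3f]
      simp
    rw [hfil, hfw, hw']
    exact bridges_insert₂ A R₁ R₂ (c, true) (c, false)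
end

section
/- If a Gauss diagram G₁ is obtained from G₂ by deleting any finite set of chords, then the number of bridges of G₁ is at most the number of bridges of G₂. -/
/-!
A bridge is a cyclically adjacent (tail, head) pair, and the relation "`x` is a tail and `y`
is a head" is cotransitive: if `R a c`, every `b` satisfies `R a b` (`b` a head) or `R b c`
(`b` a tail). So inserting a point between two neighbours never destroys an `R`-adjacency,
and deleting points, in particular the endpoints of chords, never creates one.
-/

namespace List

variable {α : Type*} (R : α → α → Prop) [DecidableRel R]

def countAdj : List α → ℕ
  | x :: y :: t => (if R x y then 1 else 0) + countAdj (y :: t)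
  | _ => 0

def countCyclicAdj (l : List α) : ℕ :=
  (l.zip (l.rotate 1)).countP fun p => R p.1 p.2

variable {R}

theorem countAdj_cons_le_countAdj_cons_cons (hR : ∀ a b c, R a c → R a b ∨ R b c)
    (a b : α) (l : List α) : countAdj R (a :: l) ≤ countAdj R (a :: b :: l) := by
  rcases l with _ | ⟨c, l⟩
  · exact Nat.zero_le _
  · simp only [countAdj]
    by_cases hac : R a c
    · rcases hR a b c hac with h | h <;> simp [hac, h]
    · simp only [hac, if_false]
      omega

theorem Sublist.countAdj_cons_le (hR : ∀ a b c, R a c → R a b ∨ R b c)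
    {l₁ l₂ : List α} (h : l₁ <+ l₂) (a : α) :
    countAdj R (a :: l₁) ≤ countAdj R (a :: l₂) := by
  induction h generalizing a with
  | slnil => rfl
  | cons b _ ih => exact (ih a).trans (countAdj_cons_le_countAdj_cons_cons hR a b _)
  | cons_cons b _ ih => exact Nat.add_le_add_left (ih b) _

theorem countCyclicAdj_rotate (l : List α) (k : ℕ) :
    countCyclicAdj R (l.rotate k) = countCyclicAdj R l := by
  have hzip : (l.rotate k).zip ((l.rotate k).rotate 1) = (l.zip (l.rotate 1)).rotate k := by
    rw [rotate_rotate, Nat.add_comm, ← rotate_rotate]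
    exact (zipWith_rotate_distrib Prod.mk l (l.rotate 1) k (length_rotate ..).symm).symm
  rw [countCyclicAdj, hzip]
  exact ((zip l (l.rotate 1)).rotate_perm k).countP_eq _

theorem countCyclicAdj_cons (a : α) (l : List α) :
    countCyclicAdj R (a :: l) = countAdj R (a :: (l ++ [a])) := by
  rw [countCyclicAdj, rotate_cons_succ, rotate_zero]
  suffices key : ∀ (x y : α) (l : List α),
      ((x :: l).zip (l ++ [y])).countP (fun p => R p.1 p.2) = countAdj R (x :: (l ++ [y])) from
    key a a l
  intro x y l
  induction l generalizing x with
  | nil => simp [countAdj]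
  | cons z l ih => simp [countAdj, countP_cons, ← ih z, Nat.add_comm]

theorem Sublist.countCyclicAdj_le (hR : ∀ a b c, R a c → R a b ∨ R b c)
    {l₁ l₂ : List α} (h : l₁ <+ l₂) : countCyclicAdj R l₁ ≤ countCyclicAdj R l₂ := by
  rcases l₁ with _ | ⟨a, l₁⟩
  · simp [countCyclicAdj]
  obtain ⟨r₁, r₂, rfl, ha, hl₁⟩ := cons_sublist_iff.mp h
  obtain ⟨u, v, rfl⟩ := append_of_mem ha
  have hrot : (u ++ a :: v ++ r₂).rotate u.length = a :: (v ++ r₂ ++ u) := by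
    simp [append_assoc, rotate_append_length_eq]
  rw [← countCyclicAdj_rotate (u ++ a :: v ++ r₂) u.length, hrot, countCyclicAdj_cons,
    countCyclicAdj_cons]
  refine Sublist.countAdj_cons_le hR (Sublist.append_right ?_ _) a
  exact hl₁.trans ((sublist_append_right v r₂).trans (sublist_append_left _ u))

end List

theorem bridges_eq_countCyclicAdj (w : List (ℕ × Bool)) :
    bridges w = w.countCyclicAdj (fun x y => x.2 = false ∧ y.2 = true) := by
  simp [bridges, List.countCyclicAdj, List.countP_eq_length_filter]

/-- Deleting any finite set of chords does not increase the number of bridges of a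
Gauss diagram. -/
theorem bridges_le_of_chordsDeletion (G₁ G₂ : GaussDiagram) (S : Finset ℕ)
    (h : IsChordsDeletion G₁ G₂ S) :
    bridges G₁.word ≤ bridges G₂.word := by
  have tailHead_cotransitive : ∀ a b c : ℕ × Bool,
      a.2 = false ∧ c.2 = true → a.2 = false ∧ b.2 = true ∨ b.2 = false ∧ c.2 = true := by
    intro a b c hac
    cases b.2 <;> simp [hac]
  rw [bridges_eq_countCyclicAdj, bridges_eq_countCyclicAdj, h]
  exact List.filter_sublist.countCyclicAdj_le tailHead_cotransitive
end

section
/- Assume there exists a projection map proj from Gauss diagrams to realizable Gauss diagrams satisfying: (1) equivalence-preservation, (2) proj(G) obtained from G by deleting chords, (3) proj fixes realizable diagrams. Then for every classical knot K and virtual knot K̃ realizable by K, the virtual bridge number satisfies vb(K̃) = b(K). -/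
section CyclicRises

variable {α : Type*} (f : α → Bool)

def rise (a b : α) : ℕ := (!f a && f b).toNat

def rises : List α → ℕ
  | a :: b :: t => rise f a b + rises (b :: t)
  | _ => 0

def cyclicRises (l : List α) : ℕ :=
  ((l.zip (l.rotate 1)).filter (fun p => !f p.1 && f p.2)).length

/-- If `f x` holds, the pair `(a, x)` is a rise whenever `(a, b)` is; otherwise `(x, b)` is. -/
lemma rise_le_rise_add_rise (a x b : α) : rise f a b ≤ rise f a x + rise f x b := by
  unfold rise
  cases f a <;> cases f x <;> cases f b <;> decide

lemma rises_eq_length_filter_zip_tail :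
    ∀ l : List α, rises f l = ((l.zip l.tail).filter (fun p => !f p.1 && f p.2)).length
  | [] | [_] => rfl
  | a :: b :: t => by
    rw [rises, rises_eq_length_filter_zip_tail (b :: t)]
    simp only [List.tail_cons, List.zip_cons_cons, List.filter_cons, rise]
    split <;> simp_all [Nat.add_comm]

lemma cyclicRises_cons (a : α) (t : List α) : cyclicRises f (a :: t) = rises f (a :: t ++ [a]) := by
  have hzip : (a :: t ++ [a]).zip (t ++ [a]) = (a :: t).zip (t ++ [a]) := by
    simpa using List.zip_append (l₁ := a :: t) (r₁ := [a]) (l₂ := t ++ [a]) (r₂ := []) (by simp)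
  rw [rises_eq_length_filter_zip_tail, show (a :: t ++ [a]).tail = t ++ [a] from rfl, hzip,
    cyclicRises, List.rotate_cons_succ, List.rotate_zero]

lemma rises_append_cons : ∀ (l : List α) (b : α) (m : List α),
    rises f (l ++ b :: m) = rises f (l ++ [b]) + rises f (b :: m)
  | [], _, _ => by simp [rises]
  | [a], _, _ => by simp [rises]
  | a :: c :: l, b, m => by
    have ih := rises_append_cons (c :: l) b m
    simp only [List.cons_append, rises] at *
    omega

lemma cyclicRises_cons_eq_append_singleton (a : α) (t : List α) :
    cyclicRises f (a :: t) = cyclicRises f (t ++ [a]) := by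
  cases t with
  | nil => rfl
  | cons b s =>
    calc cyclicRises f (a :: b :: s) = rise f a b + rises f (b :: s ++ [a]) := by
          rw [cyclicRises_cons]; rfl
      _ = rises f (b :: s ++ [a] ++ [b]) := by
          rw [List.append_assoc, List.singleton_append, rises_append_cons f (b :: s) a [b]]
          simp only [rises]
          omega
      _ = cyclicRises f (b :: s ++ [a]) := (cyclicRises_cons f b (s ++ [a])).symm

lemma rises_append_singleton_le : ∀ (l : List α) (x b : α),
    rises f (l ++ [b]) ≤ rise f x b + rises f (l ++ [x])
  | [], _, _ => by simp [rises]
  | [a], x, b => by simpa [rises, add_comm] using rise_le_rise_add_rise f a x b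
  | a :: c :: l, x, b => by
    have ih := rises_append_singleton_le (c :: l) x b
    simp only [List.cons_append, rises] at *
    omega

lemma cyclicRises_le_cons (x : α) (l : List α) : cyclicRises f l ≤ cyclicRises f (x :: l) := by
  cases l with
  | nil => exact Nat.zero_le _
  | cons b t =>
    calc cyclicRises f (b :: t) = rises f (b :: t ++ [b]) := cyclicRises_cons f b t
      _ ≤ rise f x b + rises f (b :: t ++ [x]) := rises_append_singleton_le f (b :: t) x b
      _ = cyclicRises f (x :: b :: t) := by rw [cyclicRises_cons]; rfl

lemma cyclicRises_le_of_sublist {l₁ l₂ : List α} (h : l₁.Sublist l₂) :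
    cyclicRises f l₁ ≤ cyclicRises f l₂ := by
  suffices ∀ u, cyclicRises f (l₁ ++ u) ≤ cyclicRises f (l₂ ++ u) by simpa using this []
  induction h with
  | slnil => exact fun _ => le_rfl
  | cons a _ ih => exact fun u => (ih u).trans (cyclicRises_le_cons f a _)
  | @cons_cons l₁ l₂ a _ ih =>
    intro u
    calc cyclicRises f (a :: l₁ ++ u) = cyclicRises f (l₁ ++ (u ++ [a])) := by
          rw [List.cons_append, cyclicRises_cons_eq_append_singleton, List.append_assoc]
      _ ≤ cyclicRises f (l₂ ++ (u ++ [a])) := ih _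
      _ = cyclicRises f (a :: l₂ ++ u) := by
          rw [List.cons_append, cyclicRises_cons_eq_append_singleton, List.append_assoc]

end CyclicRises

lemma bridges_le_of_sublist {w₁ w₂ : List (ℕ × Bool)} (h : w₁.Sublist w₂) :
    bridges w₁ ≤ bridges w₂ :=
  cyclicRises_le_of_sublist (fun p : ℕ × Bool => p.2) h

lemma IsChordsDeletion.bridges_le {G₁ G₂ : GaussDiagram} {S : Finset ℕ}
    (h : IsChordsDeletion G₁ G₂ S) : bridges G₁.word ≤ bridges G₂.word :=
  h ▸ bridges_le_of_sublist List.filter_sublist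

theorem virtual_bridge_number_eq_bridge_number_general
    (equiv : GaussDiagram → GaussDiagram → Prop)
    (Realizable : GaussDiagram → Prop)
    (proj : GaussDiagram → GaussDiagram)
    (hprojR : ∀ G, Realizable (proj G))
    (h1 : ∀ G₁ G₂, equiv G₁ G₂ → equiv (proj G₁) (proj G₂))
    (h2 : ∀ G, ∃ S : Finset ℕ, IsChordsDeletion (proj G) G S)
    (h3 : ∀ G, Realizable G → proj G = G)
    (G₀ : GaussDiagram) (hG₀ : Realizable G₀) :
    sInf ((fun G => bridges G.word) '' {G | equiv G G₀}) =
      sInf ((fun G => bridges G.word) '' {G | Realizable G ∧ equiv G G₀}) := by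
  refine csInf_eq_csInf_of_forall_exists_le ?_
    fun b hb => ⟨b, Set.image_mono (fun G hG => hG.2) hb, le_rfl⟩
  rintro _ ⟨G, hG, rfl⟩
  have hprojG : equiv (proj G) G₀ := h3 G₀ hG₀ ▸ h1 G G₀ hG
  obtain ⟨S, hS⟩ := h2 G
  exact ⟨_, ⟨proj G, ⟨hprojR G, hprojG⟩, rfl⟩, hS.bridges_le⟩

/-- Manturov's projection theorem implies that the virtual bridge number of a virtual
knot realizable by a classical knot `K` equals the bridge number of `K`.  The
equivalence relation `equiv` and the set `Realizable` of realizable Gauss diagrams are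
abstract; `K` is represented by a realizable diagram `G₀`, and the virtual knot `K̃`
realizable by `K` is the `equiv`-class of `G₀`.  Then
`vb(K̃) = min { bridges G : G ~ G₀ }` equals
`b(K) = min { bridges G : G realizable, G ~ G₀ }`. -/
theorem virtual_bridge_number_eq_bridge_number
    (equiv : GaussDiagram → GaussDiagram → Prop) (hequiv : Equivalence equiv)
    (Realizable : GaussDiagram → Prop)
    (proj : GaussDiagram → GaussDiagram)
    (hprojR : ∀ G, Realizable (proj G))
    (h1 : ∀ G₁ G₂, equiv G₁ G₂ → equiv (proj G₁) (proj G₂))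
    (h2 : ∀ G, ∃ S : Finset ℕ, IsChordsDeletion (proj G) G S)
    (h3 : ∀ G, Realizable G → proj G = G)
    (G₀ : GaussDiagram) (hG₀ : Realizable G₀) :
    sInf ((fun G => bridges G.word) '' {G | equiv G G₀}) =
      sInf ((fun G => bridges G.word) '' {G | Realizable G ∧ equiv G G₀}) :=
  virtual_bridge_number_eq_bridge_number_general equiv Realizable proj hprojR h1 h2 h3 G₀ hG₀
end
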